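/- (Monotone advantage of playing.) Assume ρ1 > ρ0 and either 0 < p00 − p10 < 1/5 or 0 < p10 − p00 < 1/3. Then the advantage function D(π) := L1V_w(π,1) − L0V_w(π,1) is strictly decreasing on [0,1]: for all 0 ≤ π < π' ≤ 1, D(π') < D(π). -/

import Mathlib

open Set

noncomputable section

/-- Expected immediate reward (success probability) at belief `π`. -/
def rhoB (ρ0 ρ1 π : ℝ) : ℝ := π * ρ0 + (1 - π) * ρ1

/-- Belief update after a play resulting in success. -/
def Gam1 (p00 p10 ρ0 ρ1 π : ℝ) : ℝ :=
  (π * ρ0 * p00 + (1 - π) * ρ1 * p10) / (π * ρ0 + (1 - π) * ρ1)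

/-- Belief update after a play resulting in failure. -/
def Gam0 (p00 p10 ρ0 ρ1 π : ℝ) : ℝ :=
  (π * (1 - ρ0) * p00 + (1 - π) * (1 - ρ1) * p10) /
    (π * (1 - ρ0) + (1 - π) * (1 - ρ1))

/-- Belief update without observation (natural Markov evolution). -/
def gam (p00 p10 π : ℝ) : ℝ := π * p00 + (1 - π) * p10

/-- Action value of playing an available arm. -/
def Lact1 (p00 p10 ρ0 ρ1 β θ11 : ℝ) (V : ℝ → Bool → ℝ) (π : ℝ) : ℝ :=
  rhoB ρ0 ρ1 π
    + β * rhoB ρ0 ρ1 π *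
        (θ11 * V (Gam1 p00 p10 ρ0 ρ1 π) true +
          (1 - θ11) * V (Gam1 p00 p10 ρ0 ρ1 π) false)
    + β * (1 - rhoB ρ0 ρ1 π) *
        (θ11 * V (Gam0 p00 p10 ρ0 ρ1 π) true +
          (1 - θ11) * V (Gam0 p00 p10 ρ0 ρ1 π) false)

/-- Action value of not playing an available arm (subsidy `w`). -/
def Lact0a (p00 p10 β w θ01 : ℝ) (V : ℝ → Bool → ℝ) (π : ℝ) : ℝ :=
  w + β * (θ01 * V (gam p00 p10 π) true + (1 - θ01) * V (gam p00 p10 π) false)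

/-- Action value for an unavailable arm (subsidy `w`). -/
def Lact0u (p00 p10 β w θ00 : ℝ) (V : ℝ → Bool → ℝ) (π : ℝ) : ℝ :=
  w + β * (θ00 * V (gam p00 p10 π) true + (1 - θ00) * V (gam p00 p10 π) false)

/-- Bellman operator of the constrained restless single-armed bandit with
stochastic availability; availability `y` is encoded by `Bool`. -/
def TwOp (p00 p10 ρ0 ρ1 β w θ11 θ01 θ00 : ℝ) (V : ℝ → Bool → ℝ) : ℝ → Bool → ℝ :=
  fun π y =>
    if y then max (Lact1 p00 p10 ρ0 ρ1 β θ11 V π) (Lact0a p00 p10 β w θ01 V π)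
    else Lact0u p00 p10 β w θ00 V π

/-- Bounded on the belief space `[0,1] × {0,1}`. -/
def BddOnIcc (V : ℝ → Bool → ℝ) : Prop :=
  ∃ C : ℝ, ∀ π ∈ Icc (0:ℝ) 1, ∀ y : Bool, |V π y| ≤ C

/-- Fixed point of an operator on the belief space `[0,1] × {0,1}`. -/
def FixedOnIcc (T : (ℝ → Bool → ℝ) → ℝ → Bool → ℝ) (V : ℝ → Bool → ℝ) : Prop :=
  ∀ π ∈ Icc (0:ℝ) 1, ∀ y : Bool, T V π y = V π y

/-!
The value function `V = V_w` is Lipschitz in the belief, with constant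
`K = (ρ1 - ρ0) / (1 - β |p00 - p10|)`. Indeed, value iteration from `0` converges to `V` since
`T_w` is a `β`-contraction, and `T_w` maps `K`-Lipschitz functions to `K`-Lipschitz functions:
the immediate reward moves by `(ρ1 - ρ0) |π - π'|`, and the next belief moves, on average over the
observation, by `|p00 - p10| |π - π'|`. Writing `D π - D π'` as the reward difference plus `β`
times two continuation differences, each at most `K |p00 - p10| |π - π'|`, gives
`D π - D π' ≥ (ρ1 - ρ0 - 2 β |p00 - p10| K) (π' - π)`, which is positive as soon as
`3 β |p00 - p10| < 1`.
-/

open scoped NNReal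

section Iteration

variable {α E : Type*} [PseudoMetricSpace α] [PseudoMetricSpace E]

lemma lipschitzOnWith_of_fixed_of_contraction {T : (α → E) → α → E} {s : Set α} {β C : ℝ}
    {K : ℝ≥0} (hβ0 : 0 ≤ β) (hβ1 : β < 1)
    (hT : ∀ W₁ W₂ M, (∀ x ∈ s, dist (W₁ x) (W₂ x) ≤ M) → ∀ x ∈ s, dist (T W₁ x) (T W₂ x) ≤ β * M)
    (hTK : ∀ W, LipschitzOnWith K W s → LipschitzOnWith K (T W) s)
    {W₀ V : α → E} (hW₀ : LipschitzOnWith K W₀ s) (hW₀V : ∀ x ∈ s, dist (W₀ x) (V x) ≤ C)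
    (hV : ∀ x ∈ s, T V x = V x) : LipschitzOnWith K V s := by
  have hclose : ∀ n : ℕ, ∀ x ∈ s, dist (T^[n] W₀ x) (V x) ≤ β ^ n * C := by
    intro n
    induction n with
    | zero => simpa using hW₀V
    | succ n ih =>
      intro x hx
      rw [Function.iterate_succ_apply', ← hV x hx, pow_succ', mul_assoc]
      exact hT _ _ _ ih x hx
  have hlip : ∀ n : ℕ, LipschitzOnWith K (T^[n] W₀) s := by
    intro n
    induction n with
    | zero => exact hW₀
    | succ n ih => rw [Function.iterate_succ_apply']; exact hTK _ ih
  have hlim : Filter.Tendsto (fun n => s.domRestrict (T^[n] W₀)) Filter.atTop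
      (nhds (s.domRestrict V)) := by
    refine tendsto_pi_nhds.2 fun x => tendsto_iff_dist_tendsto_zero.2 ?_
    refine squeeze_zero (fun n => dist_nonneg) (fun n => hclose n x x.2) ?_
    simpa using (tendsto_pow_atTop_nhds_zero_of_lt_one hβ0 hβ1).mul_const C
  rw [lipschitzOnWith_iff_restrict]
  exact (isClosed_setOfPred_lipschitzWith K).mem_of_tendsto hlim
    (Filter.Eventually.of_forall fun n => lipschitzOnWith_iff_restrict.1 (hlip n))

end Iteration

section Belief

variable {p00 p10 ρ0 ρ1 π π' : ℝ}

lemma rhoB_pos (hρ0 : 0 < ρ0) (hρ1 : 0 < ρ1) (hπ : π ∈ Icc (0:ℝ) 1) : 0 < rhoB ρ0 ρ1 π := by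
  obtain ⟨h0, h1⟩ := hπ
  unfold rhoB
  rcases le_total ρ0 ρ1 with h | h <;> nlinarith

lemma one_sub_rhoB : 1 - rhoB ρ0 ρ1 π = rhoB (1 - ρ0) (1 - ρ1) π := by
  unfold rhoB; ring

lemma one_sub_rhoB_pos (hρ0 : ρ0 < 1) (hρ1 : ρ1 < 1) (hπ : π ∈ Icc (0:ℝ) 1) :
    0 < 1 - rhoB ρ0 ρ1 π :=
  one_sub_rhoB (ρ0 := ρ0) ▸ rhoB_pos (sub_pos.2 hρ0) (sub_pos.2 hρ1) hπ

lemma rhoB_mem_Icc (hρ0 : ρ0 ∈ Ioo (0:ℝ) 1) (hρ1 : ρ1 ∈ Ioo (0:ℝ) 1) (hπ : π ∈ Icc (0:ℝ) 1) :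
    rhoB ρ0 ρ1 π ∈ Icc (0:ℝ) 1 :=
  ⟨(rhoB_pos hρ0.1 hρ1.1 hπ).le, sub_nonneg.1 (one_sub_rhoB_pos hρ0.2 hρ1.2 hπ).le⟩

lemma rhoB_sub : rhoB ρ0 ρ1 π - rhoB ρ0 ρ1 π' = (ρ0 - ρ1) * (π - π') := by
  unfold rhoB; ring

lemma gam_mem_Icc (hp00 : p00 ∈ Icc (0:ℝ) 1) (hp10 : p10 ∈ Icc (0:ℝ) 1)
    (hπ : π ∈ Icc (0:ℝ) 1) : gam p00 p10 π ∈ Icc (0:ℝ) 1 := by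
  obtain ⟨h0, h1⟩ := hπ
  unfold gam
  constructor <;> nlinarith [hp00.1, hp00.2, hp10.1, hp10.2]

lemma gam_sub : gam p00 p10 π - gam p00 p10 π' = (p00 - p10) * (π - π') := by
  unfold gam; ring

lemma Gam1_eq_div : Gam1 p00 p10 ρ0 ρ1 π = (π * ρ0 * p00 + (1 - π) * ρ1 * p10) / rhoB ρ0 ρ1 π :=
  rfl

lemma Gam0_eq_Gam1 : Gam0 p00 p10 ρ0 ρ1 π = Gam1 p00 p10 (1 - ρ0) (1 - ρ1) π := rfl

-- `π ρ0 / rhoB ρ0 ρ1 π` is the posterior probability of state 0 after a success (Bayes' rule).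
lemma Gam1_eq_gam (hρ0 : 0 < ρ0) (hρ1 : 0 < ρ1) (hπ : π ∈ Icc (0:ℝ) 1) :
    Gam1 p00 p10 ρ0 ρ1 π = gam p00 p10 (π * ρ0 / rhoB ρ0 ρ1 π) := by
  have hr := (rhoB_pos hρ0 hρ1 hπ).ne'
  unfold Gam1 gam
  unfold rhoB at hr ⊢
  field_simp
  ring

lemma Gam1_mem_Icc (hp00 : p00 ∈ Icc (0:ℝ) 1) (hp10 : p10 ∈ Icc (0:ℝ) 1)
    (hρ0 : 0 < ρ0) (hρ1 : 0 < ρ1) (hπ : π ∈ Icc (0:ℝ) 1) :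
    Gam1 p00 p10 ρ0 ρ1 π ∈ Icc (0:ℝ) 1 := by
  have hr := rhoB_pos hρ0 hρ1 hπ
  rw [Gam1_eq_gam hρ0 hρ1 hπ]
  refine gam_mem_Icc hp00 hp10 ⟨div_nonneg (mul_nonneg hπ.1 hρ0.le) hr.le, ?_⟩
  rw [div_le_one hr]
  unfold rhoB
  nlinarith [hπ.2]

lemma Gam0_mem_Icc (hp00 : p00 ∈ Icc (0:ℝ) 1) (hp10 : p10 ∈ Icc (0:ℝ) 1)
    (hρ0 : ρ0 < 1) (hρ1 : ρ1 < 1) (hπ : π ∈ Icc (0:ℝ) 1) :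
    Gam0 p00 p10 ρ0 ρ1 π ∈ Icc (0:ℝ) 1 := by
  rw [Gam0_eq_Gam1]
  exact Gam1_mem_Icc hp00 hp10 (sub_pos.2 hρ0) (sub_pos.2 hρ1) hπ

lemma rhoB_mul_Gam1_sub (hρ0 : 0 < ρ0) (hρ1 : 0 < ρ1) (hπ : π ∈ Icc (0:ℝ) 1)
    (hπ' : π' ∈ Icc (0:ℝ) 1) :
    rhoB ρ0 ρ1 π * (Gam1 p00 p10 ρ0 ρ1 π - Gam1 p00 p10 ρ0 ρ1 π')
      = ρ0 * ρ1 / rhoB ρ0 ρ1 π' * ((p00 - p10) * (π - π')) := by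
  have hr := (rhoB_pos hρ0 hρ1 hπ).ne'
  have hr' := (rhoB_pos hρ0 hρ1 hπ').ne'
  rw [Gam1_eq_div, Gam1_eq_div]
  field_simp
  unfold rhoB
  ring

lemma one_sub_rhoB_mul_Gam0_sub (hρ0 : ρ0 < 1) (hρ1 : ρ1 < 1) (hπ : π ∈ Icc (0:ℝ) 1)
    (hπ' : π' ∈ Icc (0:ℝ) 1) :
    (1 - rhoB ρ0 ρ1 π) * (Gam0 p00 p10 ρ0 ρ1 π - Gam0 p00 p10 ρ0 ρ1 π')
      = (1 - ρ0) * (1 - ρ1) / (1 - rhoB ρ0 ρ1 π') * ((p00 - p10) * (π - π')) := by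
  rw [one_sub_rhoB, one_sub_rhoB, Gam0_eq_Gam1, Gam0_eq_Gam1]
  exact rhoB_mul_Gam1_sub (sub_pos.2 hρ0) (sub_pos.2 hρ1) hπ hπ'

lemma Gam1_sub_Gam0 (hρ0 : ρ0 ∈ Ioo (0:ℝ) 1) (hρ1 : ρ1 ∈ Ioo (0:ℝ) 1) (hπ : π ∈ Icc (0:ℝ) 1) :
    Gam1 p00 p10 ρ0 ρ1 π - Gam0 p00 p10 ρ0 ρ1 π
      = π * (1 - π) * (ρ1 - ρ0) / (rhoB ρ0 ρ1 π * (1 - rhoB ρ0 ρ1 π)) * (p10 - p00) := by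
  have hr := (rhoB_pos hρ0.1 hρ1.1 hπ).ne'
  have hr1 := (one_sub_rhoB_pos hρ0.2 hρ1.2 hπ).ne'
  rw [one_sub_rhoB] at hr1 ⊢
  unfold Gam0 Gam1
  unfold rhoB at hr hr1 ⊢
  field_simp
  ring

lemma update_weights_sum_eq_one (hρ0 : ρ0 ∈ Ioo (0:ℝ) 1) (hρ1 : ρ1 ∈ Ioo (0:ℝ) 1)
    (hπ : π ∈ Icc (0:ℝ) 1) :
    ρ0 * ρ1 / rhoB ρ0 ρ1 π + (ρ1 - ρ0) ^ 2 * (π * (1 - π)) / (rhoB ρ0 ρ1 π * (1 - rhoB ρ0 ρ1 π))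
      + (1 - ρ0) * (1 - ρ1) / (1 - rhoB ρ0 ρ1 π) = 1 := by
  have hr := (rhoB_pos hρ0.1 hρ1.1 hπ).ne'
  have hr1 := (one_sub_rhoB_pos hρ0.2 hρ1.2 hπ).ne'
  field_simp
  unfold rhoB
  ring

-- Each term is `c * ((p00 - p10) * (π - π'))` with a weight `c ≥ 0`, and the three weights sum
-- to one: on average over the observation, the belief update moves beliefs by exactly the
-- factor `|p00 - p10|`, as the unobserved update `gam` does.
lemma abs_belief_update_sub_sum_eq (hρ0 : ρ0 ∈ Ioo (0:ℝ) 1) (hρ1 : ρ1 ∈ Ioo (0:ℝ) 1)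
    (hπ : π ∈ Icc (0:ℝ) 1) (hπ' : π' ∈ Icc (0:ℝ) 1) :
    |rhoB ρ0 ρ1 π * (Gam1 p00 p10 ρ0 ρ1 π - Gam1 p00 p10 ρ0 ρ1 π')|
      + |(rhoB ρ0 ρ1 π - rhoB ρ0 ρ1 π') * (Gam1 p00 p10 ρ0 ρ1 π' - Gam0 p00 p10 ρ0 ρ1 π')|
      + |(1 - rhoB ρ0 ρ1 π) * (Gam0 p00 p10 ρ0 ρ1 π - Gam0 p00 p10 ρ0 ρ1 π')|
      = |p00 - p10| * |π - π'| := by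
  have hr := rhoB_pos hρ0.1 hρ1.1 hπ'
  have hr1 := one_sub_rhoB_pos hρ0.2 hρ1.2 hπ'
  have hc1 : 0 ≤ ρ0 * ρ1 / rhoB ρ0 ρ1 π' := by have := hρ0.1; have := hρ1.1; positivity
  have hc2 : 0 ≤ (ρ1 - ρ0) ^ 2 * (π' * (1 - π')) / (rhoB ρ0 ρ1 π' * (1 - rhoB ρ0 ρ1 π')) := by
    have := hπ'.1; have := sub_nonneg.2 hπ'.2; positivity
  have hc0 : 0 ≤ (1 - ρ0) * (1 - ρ1) / (1 - rhoB ρ0 ρ1 π') := by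
    have := sub_pos.2 hρ0.2; have := sub_pos.2 hρ1.2; positivity
  have hmid : (rhoB ρ0 ρ1 π - rhoB ρ0 ρ1 π') * (Gam1 p00 p10 ρ0 ρ1 π' - Gam0 p00 p10 ρ0 ρ1 π')
      = (ρ1 - ρ0) ^ 2 * (π' * (1 - π')) / (rhoB ρ0 ρ1 π' * (1 - rhoB ρ0 ρ1 π'))
        * ((p00 - p10) * (π - π')) := by
    rw [rhoB_sub, Gam1_sub_Gam0 hρ0 hρ1 hπ']
    ring
  rw [rhoB_mul_Gam1_sub hρ0.1 hρ1.1 hπ hπ', hmid, one_sub_rhoB_mul_Gam0_sub hρ0.2 hρ1.2 hπ hπ',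
    abs_mul _ ((p00 - p10) * (π - π')), abs_mul _ ((p00 - p10) * (π - π')),
    abs_mul _ ((p00 - p10) * (π - π')), abs_of_nonneg hc1, abs_of_nonneg hc2,
    abs_of_nonneg hc0, ← abs_mul]
  linear_combination |(p00 - p10) * (π - π')| * update_weights_sum_eq_one hρ0 hρ1 hπ'

end Belief

section ValueFunctions

variable {p00 p10 ρ0 ρ1 β w θ π π' : ℝ} {K : ℝ≥0}

lemma abs_convexComb_sub_le {a b a' b' M : ℝ} (hθ : θ ∈ Icc (0:ℝ) 1)
    (ha : |a - a'| ≤ M) (hb : |b - b'| ≤ M) :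
    |θ * a + (1 - θ) * b - (θ * a' + (1 - θ) * b')| ≤ M := by
  have hθ0 : 0 ≤ θ := hθ.1
  have hθ1 : 0 ≤ 1 - θ := sub_nonneg.2 hθ.2
  calc |θ * a + (1 - θ) * b - (θ * a' + (1 - θ) * b')|
      = |θ * (a - a') + (1 - θ) * (b - b')| := by congr 1; ring
    _ ≤ θ * |a - a'| + (1 - θ) * |b - b'| := by
        refine (abs_add_le _ _).trans_eq ?_
        rw [abs_mul, abs_mul, abs_of_nonneg hθ0, abs_of_nonneg hθ1]
    _ ≤ θ * M + (1 - θ) * M := by gcongr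
    _ = M := by ring

lemma abs_add_mul_sub_add_mul_le {c a b M : ℝ} (hβ : 0 ≤ β) (h : |a - b| ≤ M) :
    |c + β * a - (c + β * b)| ≤ β * M := by
  rw [add_sub_add_left_eq_sub, ← mul_sub, abs_mul, abs_of_nonneg hβ]
  exact mul_le_mul_of_nonneg_left h hβ

lemma abs_apply_sub_apply_le_of_dist_le {ι : Type*} [Fintype ι] {f g : ι → ℝ} {M : ℝ}
    (h : dist f g ≤ M) (i : ι) : |f i - g i| ≤ M := by
  rw [← Real.dist_eq]
  exact (dist_le_pi_dist f g i).trans h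

lemma LipschitzOnWith.abs_mul_sub_le {f : ℝ → ℝ} {s : Set ℝ} (hf : LipschitzOnWith K f s)
    {x y : ℝ} (hx : x ∈ s) (hy : y ∈ s) (c : ℝ) : |c * (f x - f y)| ≤ K * |c * (x - y)| := by
  have h := hf.dist_le_mul x hx y hy
  rw [Real.dist_eq, Real.dist_eq] at h
  rw [abs_mul, abs_mul, mul_left_comm]
  exact mul_le_mul_of_nonneg_left h (abs_nonneg c)

def availAvg (θ : ℝ) (V : ℝ → Bool → ℝ) (π : ℝ) : ℝ :=
  θ * V π true + (1 - θ) * V π false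

def postPlayAvg (p00 p10 ρ0 ρ1 : ℝ) (f : ℝ → ℝ) (π : ℝ) : ℝ :=
  rhoB ρ0 ρ1 π * f (Gam1 p00 p10 ρ0 ρ1 π) + (1 - rhoB ρ0 ρ1 π) * f (Gam0 p00 p10 ρ0 ρ1 π)

lemma Lact1_eq (V : ℝ → Bool → ℝ) :
    Lact1 p00 p10 ρ0 ρ1 β θ V π
      = rhoB ρ0 ρ1 π + β * postPlayAvg p00 p10 ρ0 ρ1 (availAvg θ V) π := by
  unfold Lact1 postPlayAvg availAvg
  ring

lemma Lact0a_eq (V : ℝ → Bool → ℝ) :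
    Lact0a p00 p10 β w θ V π = w + β * availAvg θ V (gam p00 p10 π) :=
  rfl

lemma abs_availAvg_sub_availAvg_le {W₁ W₂ : ℝ → Bool → ℝ} {M : ℝ} (hθ : θ ∈ Icc (0:ℝ) 1)
    (h : dist (W₁ π) (W₂ π') ≤ M) : |availAvg θ W₁ π - availAvg θ W₂ π'| ≤ M :=
  abs_convexComb_sub_le hθ (abs_apply_sub_apply_le_of_dist_le h _)
    (abs_apply_sub_apply_le_of_dist_le h _)

lemma LipschitzOnWith.availAvg {W : ℝ → Bool → ℝ} {s : Set ℝ} (hθ : θ ∈ Icc (0:ℝ) 1)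
    (hW : LipschitzOnWith K W s) : LipschitzOnWith K (availAvg θ W) s :=
  LipschitzOnWith.of_dist_le_mul fun x hx x' hx' => by
    rw [Real.dist_eq]
    exact abs_availAvg_sub_availAvg_le hθ (hW.dist_le_mul x hx x' hx')

lemma abs_postPlayAvg_sub_postPlayAvg_le (hp00 : p00 ∈ Icc (0:ℝ) 1) (hp10 : p10 ∈ Icc (0:ℝ) 1)
    (hρ0 : ρ0 ∈ Ioo (0:ℝ) 1) (hρ1 : ρ1 ∈ Ioo (0:ℝ) 1) (hπ : π ∈ Icc (0:ℝ) 1) {f g : ℝ → ℝ}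
    {M : ℝ} (h : ∀ x ∈ Icc (0:ℝ) 1, |f x - g x| ≤ M) :
    |postPlayAvg p00 p10 ρ0 ρ1 f π - postPlayAvg p00 p10 ρ0 ρ1 g π| ≤ M :=
  abs_convexComb_sub_le (rhoB_mem_Icc hρ0 hρ1 hπ)
    (h _ (Gam1_mem_Icc hp00 hp10 hρ0.1 hρ1.1 hπ)) (h _ (Gam0_mem_Icc hp00 hp10 hρ0.2 hρ1.2 hπ))

lemma abs_postPlayAvg_sub_le (hp00 : p00 ∈ Icc (0:ℝ) 1) (hp10 : p10 ∈ Icc (0:ℝ) 1)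
    (hρ0 : ρ0 ∈ Ioo (0:ℝ) 1) (hρ1 : ρ1 ∈ Ioo (0:ℝ) 1) {f : ℝ → ℝ}
    (hf : LipschitzOnWith K f (Icc 0 1)) (hπ : π ∈ Icc (0:ℝ) 1) (hπ' : π' ∈ Icc (0:ℝ) 1) :
    |postPlayAvg p00 p10 ρ0 ρ1 f π - postPlayAvg p00 p10 ρ0 ρ1 f π'|
      ≤ K * (|p00 - p10| * |π - π'|) := by
  have hG1 := fun x (hx : x ∈ Icc (0:ℝ) 1) => Gam1_mem_Icc hp00 hp10 hρ0.1 hρ1.1 hx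
  have hG0 := fun x (hx : x ∈ Icc (0:ℝ) 1) => Gam0_mem_Icc hp00 hp10 hρ0.2 hρ1.2 hx
  calc |postPlayAvg p00 p10 ρ0 ρ1 f π - postPlayAvg p00 p10 ρ0 ρ1 f π'|
      = |rhoB ρ0 ρ1 π * (f (Gam1 p00 p10 ρ0 ρ1 π) - f (Gam1 p00 p10 ρ0 ρ1 π'))
          + (rhoB ρ0 ρ1 π - rhoB ρ0 ρ1 π')
            * (f (Gam1 p00 p10 ρ0 ρ1 π') - f (Gam0 p00 p10 ρ0 ρ1 π'))
          + (1 - rhoB ρ0 ρ1 π) * (f (Gam0 p00 p10 ρ0 ρ1 π) - f (Gam0 p00 p10 ρ0 ρ1 π'))| := by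
        unfold postPlayAvg
        congr 1
        ring
    _ ≤ K * |rhoB ρ0 ρ1 π * (Gam1 p00 p10 ρ0 ρ1 π - Gam1 p00 p10 ρ0 ρ1 π')|
          + K * |(rhoB ρ0 ρ1 π - rhoB ρ0 ρ1 π')
            * (Gam1 p00 p10 ρ0 ρ1 π' - Gam0 p00 p10 ρ0 ρ1 π')|
          + K * |(1 - rhoB ρ0 ρ1 π) * (Gam0 p00 p10 ρ0 ρ1 π - Gam0 p00 p10 ρ0 ρ1 π')| := by
        refine (abs_add_le _ _).trans
          (add_le_add ((abs_add_le _ _).trans (add_le_add ?_ ?_)) ?_)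
        · exact hf.abs_mul_sub_le (hG1 _ hπ) (hG1 _ hπ') _
        · exact hf.abs_mul_sub_le (hG1 _ hπ') (hG0 _ hπ') _
        · exact hf.abs_mul_sub_le (hG0 _ hπ) (hG0 _ hπ') _
    _ = K * (|p00 - p10| * |π - π'|) := by
        rw [← abs_belief_update_sub_sum_eq hρ0 hρ1 hπ hπ']
        ring

end ValueFunctions

section BellmanOperator

variable {p00 p10 ρ0 ρ1 β w θ11 θ01 θ00 π π' : ℝ} {K : ℝ≥0}

lemma TwOp_apply_true (V : ℝ → Bool → ℝ) :
    TwOp p00 p10 ρ0 ρ1 β w θ11 θ01 θ00 V π true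
      = max (Lact1 p00 p10 ρ0 ρ1 β θ11 V π) (Lact0a p00 p10 β w θ01 V π) :=
  rfl

lemma TwOp_apply_false (V : ℝ → Bool → ℝ) :
    TwOp p00 p10 ρ0 ρ1 β w θ11 θ01 θ00 V π false = Lact0a p00 p10 β w θ00 V π :=
  rfl

lemma dist_TwOp_apply_le (hp00 : p00 ∈ Icc (0:ℝ) 1) (hp10 : p10 ∈ Icc (0:ℝ) 1)
    (hρ0 : ρ0 ∈ Ioo (0:ℝ) 1) (hρ1 : ρ1 ∈ Ioo (0:ℝ) 1) (hβ : 0 ≤ β)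
    (hθ11 : θ11 ∈ Icc (0:ℝ) 1) (hθ01 : θ01 ∈ Icc (0:ℝ) 1) (hθ00 : θ00 ∈ Icc (0:ℝ) 1)
    {W₁ W₂ : ℝ → Bool → ℝ} {M : ℝ} (hW : ∀ x ∈ Icc (0:ℝ) 1, dist (W₁ x) (W₂ x) ≤ M)
    (hπ : π ∈ Icc (0:ℝ) 1) :
    dist (TwOp p00 p10 ρ0 ρ1 β w θ11 θ01 θ00 W₁ π) (TwOp p00 p10 ρ0 ρ1 β w θ11 θ01 θ00 W₂ π)
      ≤ β * M := by
  have hstay : ∀ θ ∈ Icc (0:ℝ) 1,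
      |Lact0a p00 p10 β w θ W₁ π - Lact0a p00 p10 β w θ W₂ π| ≤ β * M := fun θ hθ => by
    rw [Lact0a_eq, Lact0a_eq]
    exact abs_add_mul_sub_add_mul_le hβ
      (abs_availAvg_sub_availAvg_le hθ (hW _ (gam_mem_Icc hp00 hp10 hπ)))
  have hplay : |Lact1 p00 p10 ρ0 ρ1 β θ11 W₁ π - Lact1 p00 p10 ρ0 ρ1 β θ11 W₂ π| ≤ β * M := by
    rw [Lact1_eq, Lact1_eq]
    exact abs_add_mul_sub_add_mul_le hβ (abs_postPlayAvg_sub_postPlayAvg_le hp00 hp10 hρ0 hρ1 hπ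
      fun x hx => abs_availAvg_sub_availAvg_le hθ11 (hW x hx))
  refine (dist_pi_le_iff (mul_nonneg hβ (dist_nonneg.trans (hW π hπ)))).2 fun y => ?_
  rw [Real.dist_eq]
  cases y
  · rw [TwOp_apply_false, TwOp_apply_false]
    exact hstay θ00 hθ00
  · rw [TwOp_apply_true, TwOp_apply_true]
    exact (abs_max_sub_max_le_max _ _ _ _).trans (max_le hplay (hstay θ01 hθ01))

lemma abs_Lact0a_sub_le (hp00 : p00 ∈ Icc (0:ℝ) 1) (hp10 : p10 ∈ Icc (0:ℝ) 1) (hβ : 0 ≤ β)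
    {θ : ℝ} (hθ : θ ∈ Icc (0:ℝ) 1) {V : ℝ → Bool → ℝ} (hV : LipschitzOnWith K V (Icc 0 1))
    (hπ : π ∈ Icc (0:ℝ) 1) (hπ' : π' ∈ Icc (0:ℝ) 1) :
    |Lact0a p00 p10 β w θ V π - Lact0a p00 p10 β w θ V π'|
      ≤ β * (K * (|p00 - p10| * |π - π'|)) := by
  rw [Lact0a_eq, Lact0a_eq]
  refine abs_add_mul_sub_add_mul_le hβ ?_
  have h := (hV.availAvg hθ).dist_le_mul _ (gam_mem_Icc hp00 hp10 hπ) _ (gam_mem_Icc hp00 hp10 hπ')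
  rwa [Real.dist_eq, Real.dist_eq, gam_sub, abs_mul] at h

lemma abs_Lact1_sub_sub_le (hp00 : p00 ∈ Icc (0:ℝ) 1) (hp10 : p10 ∈ Icc (0:ℝ) 1)
    (hρ0 : ρ0 ∈ Ioo (0:ℝ) 1) (hρ1 : ρ1 ∈ Ioo (0:ℝ) 1) (hβ : 0 ≤ β) (hθ11 : θ11 ∈ Icc (0:ℝ) 1)
    {V : ℝ → Bool → ℝ} (hV : LipschitzOnWith K V (Icc 0 1))
    (hπ : π ∈ Icc (0:ℝ) 1) (hπ' : π' ∈ Icc (0:ℝ) 1) :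
    |Lact1 p00 p10 ρ0 ρ1 β θ11 V π - Lact1 p00 p10 ρ0 ρ1 β θ11 V π'
        - (rhoB ρ0 ρ1 π - rhoB ρ0 ρ1 π')| ≤ β * (K * (|p00 - p10| * |π - π'|)) := by
  rw [Lact1_eq, Lact1_eq, add_sub_add_comm, add_sub_cancel_left, ← mul_sub,
    abs_mul, abs_of_nonneg hβ]
  exact mul_le_mul_of_nonneg_left
    (abs_postPlayAvg_sub_le hp00 hp10 hρ0 hρ1 (hV.availAvg hθ11) hπ hπ') hβ

lemma TwOp_lipschitzOnWith (hp00 : p00 ∈ Icc (0:ℝ) 1) (hp10 : p10 ∈ Icc (0:ℝ) 1)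
    (hρ0 : ρ0 ∈ Ioo (0:ℝ) 1) (hρ1 : ρ1 ∈ Ioo (0:ℝ) 1) (hβ : 0 ≤ β)
    (hθ11 : θ11 ∈ Icc (0:ℝ) 1) (hθ01 : θ01 ∈ Icc (0:ℝ) 1) (hθ00 : θ00 ∈ Icc (0:ℝ) 1)
    (hK : |ρ1 - ρ0| + β * |p00 - p10| * K ≤ K) {W : ℝ → Bool → ℝ}
    (hW : LipschitzOnWith K W (Icc 0 1)) :
    LipschitzOnWith K (TwOp p00 p10 ρ0 ρ1 β w θ11 θ01 θ00 W) (Icc 0 1) := by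
  refine LipschitzOnWith.of_dist_le_mul fun π hπ π' hπ' => ?_
  have hgain : (|ρ1 - ρ0| + β * |p00 - p10| * K) * |π - π'| ≤ K * |π - π'| :=
    mul_le_mul_of_nonneg_right hK (abs_nonneg _)
  have hstay : ∀ θ ∈ Icc (0:ℝ) 1,
      |Lact0a p00 p10 β w θ W π - Lact0a p00 p10 β w θ W π'| ≤ K * |π - π'| := fun θ hθ => by
    have := abs_Lact0a_sub_le (w := w) hp00 hp10 hβ hθ hW hπ hπ'
    nlinarith [mul_nonneg (abs_nonneg (ρ1 - ρ0)) (abs_nonneg (π - π'))]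
  have hplay : |Lact1 p00 p10 ρ0 ρ1 β θ11 W π - Lact1 p00 p10 ρ0 ρ1 β θ11 W π'| ≤ K * |π - π'| := by
    have h1 := abs_Lact1_sub_sub_le hp00 hp10 hρ0 hρ1 hβ hθ11 hW hπ hπ'
    have h2 : |rhoB ρ0 ρ1 π - rhoB ρ0 ρ1 π'| = |ρ1 - ρ0| * |π - π'| := by
      rw [rhoB_sub, abs_mul, abs_sub_comm ρ0]
    have h3 := abs_sub_abs_le_abs_sub
      (Lact1 p00 p10 ρ0 ρ1 β θ11 W π - Lact1 p00 p10 ρ0 ρ1 β θ11 W π')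
      (rhoB ρ0 ρ1 π - rhoB ρ0 ρ1 π')
    nlinarith
  refine (dist_pi_le_iff (by positivity)).2 fun y => ?_
  rw [Real.dist_eq, Real.dist_eq]
  cases y
  · rw [TwOp_apply_false, TwOp_apply_false]
    exact hstay θ00 hθ00
  · rw [TwOp_apply_true, TwOp_apply_true]
    exact (abs_max_sub_max_le_max _ _ _ _).trans (max_le hplay (hstay θ01 hθ01))

lemma strictAntiOn_Lact1_sub_Lact0a (hp00 : p00 ∈ Icc (0:ℝ) 1) (hp10 : p10 ∈ Icc (0:ℝ) 1)
    (hρ0 : ρ0 ∈ Ioo (0:ℝ) 1) (hρ1 : ρ1 ∈ Ioo (0:ℝ) 1) (hβ : 0 ≤ β)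
    (hθ11 : θ11 ∈ Icc (0:ℝ) 1) (hθ01 : θ01 ∈ Icc (0:ℝ) 1) {V : ℝ → Bool → ℝ}
    (hV : LipschitzOnWith K V (Icc 0 1)) (hgap : 2 * (β * |p00 - p10|) * K < ρ1 - ρ0) :
    StrictAntiOn (fun π => Lact1 p00 p10 ρ0 ρ1 β θ11 V π - Lact0a p00 p10 β w θ01 V π)
      (Icc 0 1) := by
  intro π hπ π' hπ' hlt
  have hplay := (abs_le.1 (abs_Lact1_sub_sub_le hp00 hp10 hρ0 hρ1 hβ hθ11 hV hπ hπ')).1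
  have hstay := (abs_le.1 (abs_Lact0a_sub_le (w := w) hp00 hp10 hβ hθ01 hV hπ hπ')).2
  rw [rhoB_sub, abs_of_neg (sub_neg.2 hlt)] at hplay
  rw [abs_of_neg (sub_neg.2 hlt)] at hstay
  nlinarith [mul_pos (sub_pos.2 hgap) (sub_pos.2 hlt)]

end BellmanOperator

-- `K = a / (1 - q)` is the fixed point of `L ↦ a + q L`, and for it `2 q K < a` means `3 q < 1`.
lemma exists_nnreal_add_mul_le_self_and_two_mul_lt {a q : ℝ} (ha : 0 < a)
    (h3q : 3 * q < 1) : ∃ K : ℝ≥0, a + q * K ≤ K ∧ 2 * q * K < a := by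
  have h1q : 0 < 1 - q := by linarith
  refine ⟨(a / (1 - q)).toNNReal, ?_, ?_⟩ <;> rw [Real.coe_toNNReal _ (div_pos ha h1q).le]
  · field_simp
    linarith
  · rw [mul_div_assoc', div_lt_iff₀ h1q]
    nlinarith

lemma BddOnIcc.exists_dist_zero_le {V : ℝ → Bool → ℝ} (hV : BddOnIcc V) :
    ∃ C, ∀ π ∈ Icc (0:ℝ) 1, dist (0 : Bool → ℝ) (V π) ≤ C := by
  obtain ⟨C, hC⟩ := hV
  refine ⟨C, fun π hπ => (dist_pi_le_iff ((abs_nonneg _).trans (hC π hπ true))).2 fun y => ?_⟩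
  simpa [Real.dist_eq] using hC π hπ y

/-- **Monotone advantage of playing.** If `ρ1 > ρ0` and either
`0 < p00 − p10 < 1/5` or `0 < p10 − p00 < 1/3`, then the advantage function
`D(π) = L1 V_w(π,1) − L0 V_w(π,1)` is strictly decreasing on `[0,1]`. -/
theorem stmt9 (p00 p10 ρ0 ρ1 β w θ11 θ01 θ00 : ℝ)
    (hp00 : p00 ∈ Icc (0:ℝ) 1) (hp10 : p10 ∈ Icc (0:ℝ) 1)
    (hρ0 : 0 < ρ0) (hρ01 : ρ0 < ρ1) (hρ1 : ρ1 < 1)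
    (hβ : β ∈ Ioo (0:ℝ) 1)
    (hθ11 : θ11 ∈ Icc (0:ℝ) 1) (hθ01 : θ01 ∈ Icc (0:ℝ) 1) (hθ00 : θ00 ∈ Icc (0:ℝ) 1)
    (hp : (0 < p00 - p10 ∧ p00 - p10 < 1/5) ∨ (0 < p10 - p00 ∧ p10 - p00 < 1/3))
    (V : ℝ → Bool → ℝ) (hVb : BddOnIcc V)
    (hVfix : FixedOnIcc (TwOp p00 p10 ρ0 ρ1 β w θ11 θ01 θ00) V) :
    ∀ π ∈ Icc (0:ℝ) 1, ∀ π' ∈ Icc (0:ℝ) 1, π < π' →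
      Lact1 p00 p10 ρ0 ρ1 β θ11 V π' - Lact0a p00 p10 β w θ01 V π'
        < Lact1 p00 p10 ρ0 ρ1 β θ11 V π - Lact0a p00 p10 β w θ01 V π := by
  have hρ0' : ρ0 ∈ Ioo (0:ℝ) 1 := ⟨hρ0, hρ01.trans hρ1⟩
  have hρ1' : ρ1 ∈ Ioo (0:ℝ) 1 := ⟨hρ0.trans hρ01, hρ1⟩
  have hδ : |p00 - p10| < 1 / 3 :=
    abs_sub_lt_iff.2 (by rcases hp with h | h <;> constructor <;> linarith)
  have hq : 3 * (β * |p00 - p10|) < 1 := by nlinarith [abs_nonneg (p00 - p10), hβ.1, hβ.2]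
  obtain ⟨K, hK, hgap⟩ := exists_nnreal_add_mul_le_self_and_two_mul_lt
    (abs_pos.2 (sub_ne_zero.2 hρ01.ne')) hq
  rw [abs_of_pos (sub_pos.2 hρ01)] at hgap
  obtain ⟨C, hC⟩ := hVb.exists_dist_zero_le
  have hVK : LipschitzOnWith K V (Icc 0 1) :=
    lipschitzOnWith_of_fixed_of_contraction (T := TwOp p00 p10 ρ0 ρ1 β w θ11 θ01 θ00) hβ.1.le hβ.2
      (fun _ _ _ hW _ hπ => dist_TwOp_apply_le hp00 hp10 hρ0' hρ1' hβ.1.le hθ11 hθ01 hθ00 hW hπ)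
      (fun _ hW => TwOp_lipschitzOnWith hp00 hp10 hρ0' hρ1' hβ.1.le hθ11 hθ01 hθ00 hK hW)
      (LipschitzWith.const' 0).lipschitzOnWith hC (fun x hx => funext (hVfix x hx))
  exact strictAntiOn_Lact1_sub_Lact0a hp00 hp10 hρ0' hρ1' hβ.1.le hθ11 hθ01 hVK hgap
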